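/- Let f be a Boolean function on k+1 variables that depends on all of them and let Ψ = f(H_{k0},…,H_{kk}). If θ is a partial assignment having at least 3 pairwise independent transversals, then every partial assignment θ' with Ψ[θ'] = Ψ[θ] has exactly the same set of transversals as θ. -/

import Mathlib

/-! ### Basic notions on Boolean functions -/

namespace BF

variable {V : Type}

/-- Restriction `Φ[θ]` of a Boolean function `Φ` by a partial assignment `θ`. -/
def restrict (Φ : (V → Bool) → Bool) (θ : V → Option Bool) : (V → Bool) → Bool :=
  fun a => Φ (fun v => (θ v).getD (a v))

/-- Combination `θ ∪ μ` of two partial assignments, where `θ` takes priority. -/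
def combine (θ μ : V → Option Bool) : V → Option Bool :=
  fun v => (θ v).elim (μ v) some

/-- The partial assignment setting the single variable `X` to `b`. -/
def single [DecidableEq V] (X : V) (b : Bool) : V → Option Bool :=
  fun v => if v = X then some b else none

/-- A term (conjunction of literals, given as a partial assignment) implies `Φ`. -/
def TermImplies (τ : V → Option Bool) (Φ : (V → Bool) → Bool) : Prop :=
  ∀ a : V → Bool, (∀ v b, τ v = some b → a v = b) → Φ a = true

/-- `τ'` is a subterm (subconjunction) of `τ`. -/
def Subterm (τ' τ : V → Option Bool) : Prop :=
  ∀ v b, τ' v = some b → τ v = some b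

/-- `τ` is a prime implicant of `Φ`: it implies `Φ`, and no proper subconjunction does. -/
def IsPrimeImplicant (τ : V → Option Bool) (Φ : (V → Bool) → Bool) : Prop :=
  TermImplies τ Φ ∧ ∀ τ', Subterm τ' τ → τ' ≠ τ → ¬ TermImplies τ' Φ

/-- The variable `X` is a unit of `Φ`: by itself (positively) a prime implicant of `Φ`. -/
def IsUnit [DecidableEq V] (X : V) (Φ : (V → Bool) → Bool) : Prop :=
  IsPrimeImplicant (single X true) Φ

/-- `Φ` depends on the variable `v`. -/
def DependsOnVar [DecidableEq V] (Φ : (V → Bool) → Bool) (v : V) : Prop :=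
  ∃ a : V → Bool, Φ (Function.update a v true) ≠ Φ (Function.update a v false)

/-- The set of units of `Φ`. -/
def unitSet [DecidableEq V] (Φ : (V → Bool) → Bool) : Set V :=
  {X | IsUnit X Φ}

/-- The degree of a variable `X` in `Φ`: the maximum over partial assignments `θ`
(not assigning `X`) of the number of units of `Φ[θ ∪ {X=1}]` that are not units of
`Φ[θ]`. -/
noncomputable def degreeOf [Fintype V] [DecidableEq V] (Φ : (V → Bool) → Bool) (X : V) : ℕ :=
  sSup { m | ∃ θ : V → Option Bool, θ X = none ∧
    m = (unitSet (restrict Φ (combine (single X true) θ)) \ unitSet (restrict Φ θ)).ncard }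

/-- `Δ(Φ)`: the maximum degree of any variable of `Φ`. -/
noncomputable def maxDegree [Fintype V] [DecidableEq V] (Φ : (V → Bool) → Bool) : ℕ :=
  Finset.univ.sup (fun X => degreeOf Φ X)

end BF

/-! ### FBDDs (free binary decision diagrams), possibly multi-output -/

/-- A node of a (multi-output) FBDD: a sink labeled by an output value, or a decision
node labeled by a variable with a 0-edge and a 1-edge (children are given as indices,
which are required to be smaller, guaranteeing acyclicity). -/
inductive BddNode (V O : Type) where
  | sink (o : O)
  | decision (x : V) (lo hi : ℕ)

/-- A (multi-output) FBDD structure: a rooted DAG with nodes `0, …, size-1`, in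
topological order (edges decrease the index).  Freeness (read-once) is the
predicate `FBDD.ReadOnce` below. -/
structure FBDD (V O : Type) where
  size : ℕ
  node : Fin size → BddNode V O
  root : Fin size
  dec : ∀ (i : Fin size) (x : V) (lo hi : ℕ),
      node i = .decision x lo hi → lo < i.1 ∧ hi < i.1

namespace FBDD

variable {V O : Type}

/-- The output computed at node `i` on the total assignment `a`. -/
def evalAt (F : FBDD V O) (a : V → Bool) (i : Fin F.size) : O :=
  match h : F.node i with
  | .sink o => o
  | .decision x lo hi =>
      have hd := F.dec i x lo hi h
      if a x then F.evalAt a ⟨hi, hd.2.trans i.isLt⟩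
      else F.evalAt a ⟨lo, hd.1.trans i.isLt⟩
termination_by i.1
decreasing_by
  · exact hd.2
  · exact hd.1

/-- The output of the FBDD on a total assignment. -/
def eval (F : FBDD V O) (a : V → Bool) : O := F.evalAt a F.root

/-- Edge relation of the underlying DAG. -/
def edge (F : FBDD V O) (i j : Fin F.size) : Prop :=
  ∃ x lo hi, F.node i = .decision x lo hi ∧ (j.1 = lo ∨ j.1 = hi)

/-- Reachability in the underlying DAG. -/
def reach (F : FBDD V O) : Fin F.size → Fin F.size → Prop :=
  Relation.ReflTransGen F.edge

/-- Node `i` tests the variable `x`. -/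
def tests (F : FBDD V O) (i : Fin F.size) (x : V) : Prop :=
  ∃ lo hi, F.node i = .decision x lo hi

/-- The FBDD is free (read-once): along every path from the root, each variable is
tested at most once. -/
def ReadOnce (F : FBDD V O) : Prop :=
  ∀ i c j x, F.reach F.root i → F.tests i x → F.edge i c → F.reach c j →
    ¬ F.tests j x

/-- A single-output FBDD computes the Boolean function `Φ`. -/
def Computes (F : FBDD V Bool) (Φ : (V → Bool) → Bool) : Prop :=
  ∀ a, F.eval a = Φ a

/-- A multi-output FBDD simultaneously computes the `m` Boolean functions `Φ`. -/
def ComputesAll {m : ℕ} (F : FBDD V (Fin m → Bool)) (Φ : Fin m → (V → Bool) → Bool) : Prop :=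
  ∀ a l, F.eval a l = Φ l a

/-- The Boolean function computed by the sub-DAG rooted at node `u`. -/
def funAt (F : FBDD V Bool) (u : Fin F.size) : (V → Bool) → Bool :=
  fun a => F.evalAt a u

/-- The FBDD follows the unit rule: at every (reachable) node `u` whose function has a
unit, the variable tested at `u` is a unit of that function. -/
def FollowsUnitRule [DecidableEq V] (F : FBDD V Bool) : Prop :=
  ∀ u : Fin F.size, F.reach F.root u → (∃ X, BF.IsUnit X (F.funAt u)) →
    ∀ x, F.tests u x → BF.IsUnit x (F.funAt u)

end FBDD

/-! ### DLDDs (decomposable logic decision diagrams) -/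

/-- A node of a DLDD: a sink, a decision node, a NOT-node, or a binary
AND/OR/XOR/EQUIV gate (children given as smaller indices). -/
inductive DlddNode (V : Type) where
  | sink (b : Bool)
  | decision (x : V) (lo hi : ℕ)
  | not (c : ℕ)
  | and (c1 c2 : ℕ)
  | or (c1 c2 : ℕ)
  | xor (c1 c2 : ℕ)
  | equiv (c1 c2 : ℕ)

/-- The children of a DLDD node. -/
def DlddNode.children {V : Type} : DlddNode V → List ℕ
  | .sink _ => []
  | .decision _ lo hi => [lo, hi]
  | .not c => [c]
  | .and c1 c2 => [c1, c2]
  | .or c1 c2 => [c1, c2]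
  | .xor c1 c2 => [c1, c2]
  | .equiv c1 c2 => [c1, c2]

/-- The children of a DLDD node, if it is a binary gate. -/
def DlddNode.gateChildren {V : Type} : DlddNode V → Option (ℕ × ℕ)
  | .and c1 c2 => some (c1, c2)
  | .or c1 c2 => some (c1, c2)
  | .xor c1 c2 => some (c1, c2)
  | .equiv c1 c2 => some (c1, c2)
  | _ => none

/-- A DLDD structure: a rooted DAG with nodes `0, …, size-1` in topological order.
Freeness and decomposability are the predicates `DLDD.ReadOnce` and
`DLDD.Decomposable` below. -/
structure DLDD (V : Type) where
  size : ℕ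
  node : Fin size → DlddNode V
  root : Fin size
  dec : ∀ (i : Fin size), ∀ c ∈ (node i).children, c < i.1

namespace DLDD

variable {V : Type}

/-- The Boolean value computed at node `i` on a total assignment `a`. -/
def evalAt (D : DLDD V) (a : V → Bool) (i : Fin D.size) : Bool :=
  match h : D.node i with
  | .sink b => b
  | .decision x lo hi =>
      have hlo : lo < i.1 := D.dec i lo (by rw [h]; simp [DlddNode.children])
      have hhi : hi < i.1 := D.dec i hi (by rw [h]; simp [DlddNode.children])
      if a x then D.evalAt a ⟨hi, hhi.trans i.isLt⟩
      else D.evalAt a ⟨lo, hlo.trans i.isLt⟩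
  | .not c =>
      have hc : c < i.1 := D.dec i c (by rw [h]; simp [DlddNode.children])
      ! D.evalAt a ⟨c, hc.trans i.isLt⟩
  | .and c1 c2 =>
      have h1 : c1 < i.1 := D.dec i c1 (by rw [h]; simp [DlddNode.children])
      have h2 : c2 < i.1 := D.dec i c2 (by rw [h]; simp [DlddNode.children])
      D.evalAt a ⟨c1, h1.trans i.isLt⟩ && D.evalAt a ⟨c2, h2.trans i.isLt⟩
  | .or c1 c2 =>
      have h1 : c1 < i.1 := D.dec i c1 (by rw [h]; simp [DlddNode.children])
      have h2 : c2 < i.1 := D.dec i c2 (by rw [h]; simp [DlddNode.children])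
      D.evalAt a ⟨c1, h1.trans i.isLt⟩ || D.evalAt a ⟨c2, h2.trans i.isLt⟩
  | .xor c1 c2 =>
      have h1 : c1 < i.1 := D.dec i c1 (by rw [h]; simp [DlddNode.children])
      have h2 : c2 < i.1 := D.dec i c2 (by rw [h]; simp [DlddNode.children])
      Bool.xor (D.evalAt a ⟨c1, h1.trans i.isLt⟩) (D.evalAt a ⟨c2, h2.trans i.isLt⟩)
  | .equiv c1 c2 =>
      have h1 : c1 < i.1 := D.dec i c1 (by rw [h]; simp [DlddNode.children])
      have h2 : c2 < i.1 := D.dec i c2 (by rw [h]; simp [DlddNode.children])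
      D.evalAt a ⟨c1, h1.trans i.isLt⟩ == D.evalAt a ⟨c2, h2.trans i.isLt⟩
termination_by i.1
decreasing_by
  · exact hhi
  · exact hlo
  · exact hc
  · exact h1
  · exact h2
  · exact h1
  · exact h2
  · exact h1
  · exact h2
  · exact h1
  · exact h2

/-- The Boolean value computed by the DLDD. -/
def eval (D : DLDD V) (a : V → Bool) : Bool := D.evalAt a D.root

/-- Edge relation of the underlying DAG. -/
def edge (D : DLDD V) (i j : Fin D.size) : Prop := j.1 ∈ (D.node i).children

/-- Reachability in the underlying DAG. -/
def reach (D : DLDD V) : Fin D.size → Fin D.size → Prop :=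
  Relation.ReflTransGen D.edge

/-- Node `i` is a decision node testing the variable `x`. -/
def tests (D : DLDD V) (i : Fin D.size) (x : V) : Prop :=
  ∃ lo hi, D.node i = .decision x lo hi

/-- Along every path from the root, each variable is tested at most once. -/
def ReadOnce (D : DLDD V) : Prop :=
  ∀ i c j x, D.reach D.root i → D.tests i x → D.edge i c → D.reach c j →
    ¬ D.tests j x

/-- The variable `x` is mentioned in the sub-DAG rooted at `i`. -/
def mentions (D : DLDD V) (i : Fin D.size) (x : V) : Prop :=
  ∃ j, D.reach i j ∧ D.tests j x

/-- Decomposability: the two children's sub-DAGs of any (reachable) binary gate node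
mention no common variable. -/
def Decomposable (D : DLDD V) : Prop :=
  ∀ (i : Fin D.size) (c1 c2 : ℕ), D.reach D.root i →
    (D.node i).gateChildren = some (c1, c2) →
    ∀ (h1 : c1 < D.size) (h2 : c2 < D.size) (x : V),
      ¬ (D.mentions ⟨c1, h1⟩ x ∧ D.mentions ⟨c2, h2⟩ x)

/-- The DLDD computes the Boolean function `Φ`. -/
def Computes (D : DLDD V) (Φ : (V → Bool) → Bool) : Prop :=
  ∀ a, D.eval a = Φ a

end DLDD

/-! ### The queries `h_{kℓ}` and their lineages `H_{kℓ}` -/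

/-- The Boolean variables `R(i)`, `S_ℓ(i,j)` (for `1 ≤ ℓ ≤ k`, encoded by `Fin k`),
and `T(j)`, for `i, j ∈ [n]`. -/
inductive HVar (n k : ℕ) where
  | R (i : Fin n)
  | S (l : Fin k) (i j : Fin n)
  | T (j : Fin n)
deriving DecidableEq

/-- The first variable of the prime implicant `P_{ℓ,i,j}`: `R(i)` if `ℓ = 0`,
otherwise `S_ℓ(i,j)`. -/
def leftVar (n k : ℕ) (l : Fin (k+1)) (i j : Fin n) : HVar n k :=
  if h : l.1 = 0 then .R i else .S ⟨l.1 - 1, by have := l.isLt; omega⟩ i j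

/-- The second variable of the prime implicant `P_{ℓ,i,j}`: `T(j)` if `ℓ = k`,
otherwise `S_{ℓ+1}(i,j)`. -/
def rightVar (n k : ℕ) (l : Fin (k+1)) (i j : Fin n) : HVar n k :=
  if h : l.1 = k then .T j else .S ⟨l.1, by have := l.isLt; omega⟩ i j

/-- The conjunction `P_{ℓ,i,j}` as a Boolean function. -/
def Pfun (n k : ℕ) (l : Fin (k+1)) (i j : Fin n) : (HVar n k → Bool) → Bool :=
  fun a => a (leftVar n k l i j) && a (rightVar n k l i j)

/-- The conjunction `P_{ℓ,i,j}` as a term (partial assignment). -/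
def Pterm (n k : ℕ) (l : Fin (k+1)) (i j : Fin n) : HVar n k → Option Bool :=
  fun v => if v = leftVar n k l i j ∨ v = rightVar n k l i j then some true else none

/-- The lineage `H_{kℓ} = ⋁_{i,j∈[n]} P_{ℓ,i,j}`. -/
def Hfun (n k : ℕ) (l : Fin (k+1)) : (HVar n k → Bool) → Bool :=
  fun a => decide (∃ i j : Fin n, Pfun n k l i j a = true)

/-- The lineage `H_k = H_{k0} ∨ H_{k1} ∨ ⋯ ∨ H_{kk}`. -/
def HkFun (n k : ℕ) : (HVar n k → Bool) → Bool :=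
  fun a => decide (∃ l : Fin (k+1), Hfun n k l a = true)

/-- The lineages `B_0 = ⋁_i R(i)`, `B_ℓ = ⋁_{i,j} S_ℓ(i,j)` for `1 ≤ ℓ ≤ k`, and
`B_{k+1} = ⋁_j T(j)`. -/
def Bfun (n k : ℕ) (l : Fin (k+2)) : (HVar n k → Bool) → Bool :=
  fun a => decide (∃ i j : Fin n,
    (if _ : l.1 = 0 then a (.R i)
     else if _ : l.1 = k + 1 then a (.T j)
     else a (.S ⟨l.1 - 1, by have := l.isLt; omega⟩ i j)) = true)

/-- A Boolean function `f` on `m` variables depends on its `l`-th variable: some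
assignment `μ` to the remaining variables restricts `f` to `X_l` or `¬X_l`. -/
def BFDependsOn {m : ℕ} (f : (Fin m → Bool) → Bool) (l : Fin m) : Prop :=
  ∃ μ : Fin m → Bool,
    (∀ b, f (Function.update μ l b) = b) ∨ (∀ b, f (Function.update μ l b) = !b)

/-- The lineage `Ψ = f(H_{k0}, …, H_{kk})`. -/
def Psi (n k : ℕ) (f : (Fin (k+1) → Bool) → Bool) : (HVar n k → Bool) → Bool :=
  fun a => f (fun l => Hfun n k l a)

/-- `(i,j)` is a transversal of the partial assignment `θ`: for every `0 ≤ ℓ ≤ k`,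
`P_{ℓ,i,j}` is a prime implicant of `H_{kℓ}[θ]`. -/
def Transversal (n k : ℕ) (θ : HVar n k → Option Bool) (p : Fin n × Fin n) : Prop :=
  ∀ l : Fin (k+1), BF.IsPrimeImplicant (Pterm n k l p.1 p.2) (BF.restrict (Hfun n k l) θ)

/-- Two pairs of indices are independent: they differ in both coordinates. -/
def IndepPairs {n : ℕ} (p q : Fin n × Fin n) : Prop := p.1 ≠ q.1 ∧ p.2 ≠ q.2

/-- `θ` has (at least) `m` pairwise independent transversals. -/
def HasIndepTransversals (n k : ℕ) (θ : HVar n k → Option Bool) (m : ℕ) : Prop :=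
  ∃ S : Finset (Fin n × Fin n), m ≤ S.card ∧ (∀ p ∈ S, Transversal n k θ p) ∧
    (S : Set (Fin n × Fin n)).Pairwise IndepPairs

/-- The maximum number of pairwise independent transversals of `θ`. -/
noncomputable def maxIndepTransversals (n k : ℕ) (θ : HVar n k → Option Bool) : ℕ :=
  sSup { m | ∃ S : Finset (Fin n × Fin n), S.card = m ∧ (∀ p ∈ S, Transversal n k θ p) ∧
    (S : Set (Fin n × Fin n)).Pairwise IndepPairs }

/-- A restriction `Φ` of `Ψ = f(H_{k0},…,H_{kk})` is transversal-free: some `θ` with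
`Ψ[θ] = Φ` has no transversals. -/
def TransversalFree (n k : ℕ) (f : (Fin (k+1) → Bool) → Bool)
    (Φ : (HVar n k → Bool) → Bool) : Prop :=
  ∃ θ : HVar n k → Option Bool, BF.restrict (Psi n k f) θ = Φ ∧
    ∀ p : Fin n × Fin n, ¬ Transversal n k θ p

/-- `Z` is an `H_k`-unit of the restriction `Φ` of `Ψ`: `Φ[Z=1]` is transversal-free
but `Φ` is not. -/
def IsHkUnit (n k : ℕ) (f : (Fin (k+1) → Bool) → Bool) (Z : HVar n k)
    (Φ : (HVar n k → Bool) → Bool) : Prop :=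
  TransversalFree n k f (BF.restrict Φ (BF.single Z true)) ∧ ¬ TransversalFree n k f Φ

/-- A restriction `Φ` of `Ψ` is transparent: the residual lineages `H_{kℓ}[θ]` are
the same for every `θ` with `Ψ[θ] = Φ`. -/
def Transparent (n k : ℕ) (f : (Fin (k+1) → Bool) → Bool)
    (Φ : (HVar n k → Bool) → Bool) : Prop :=
  ∃ φ : Fin (k+1) → ((HVar n k → Bool) → Bool),
    ∀ θ : HVar n k → Option Bool, BF.restrict (Psi n k f) θ = Φ →
      ∀ l, BF.restrict (Hfun n k l) θ = φ l

/-- The Boolean variables of the query `h_0`. -/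
inductive H0Var (n : ℕ) where
  | R (i : Fin n)
  | S (i j : Fin n)
  | T (j : Fin n)
deriving DecidableEq

/-- The lineage `H_0 = ⋁_{i,j∈[n]} R(i) ∧ S(i,j) ∧ T(j)`. -/
def H0Fun (n : ℕ) : (H0Var n → Bool) → Bool :=
  fun a => decide (∃ i j : Fin n, (a (.R i) && a (.S i j) && a (.T j)) = true)

/-!
A pair `(i, j)` is a transversal of `θ` exactly when, for every `ℓ`, `H_{kℓ}[θ]` restricted to
assignments supported on the chain `R(i), S₁(i,j), …, S_k(i,j), T(j)` is the conjunction of the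
`ℓ`-th and `(ℓ+1)`-st chain variables. Independent chains share no edge of any `H_{kℓ}`, so on an
assignment supported on a union of them each `H_{kℓ}[θ]` is the disjunction of its values on the
single chains.

Let `p` be a transversal of `θ`. Put an arbitrary vector `d` on the chain of `p`, and on two or
three of the independent transversals of `θ` put assignments whose edges form an arbitrary
pattern `B` (a parity colouring of the runs of `B`; a chain sharing a row or a column with `p`
stays away from the end where it would touch the chain of `p`). Then `Ψ[θ'] = Ψ[θ]` reads
`f(d_ℓ ∧ d_{ℓ+1} ∨ B_ℓ) = f(G_ℓ(d_ℓ, d_{ℓ+1}) ∨ W_ℓ)`, where `G_ℓ` is `H_{kℓ}[θ']` on the chain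
of `p` and `W_ℓ` does not depend on `d`. As `f` depends on every argument, comparing `d` with
`d` plus one more vertex at an extremal `ℓ` forces every `G_ℓ` to be the conjunction, so `p` is
a transversal of `θ'`. In particular `θ'` has three independent transversals as well, and the
same argument with `θ` and `θ'` exchanged gives the converse.
-/

namespace BF

variable {V : Type}

def fill (θ : V → Option Bool) (a : V → Bool) : V → Bool :=
  fun v => (θ v).getD (a v)

theorem restrict_apply (Φ : (V → Bool) → Bool) (θ : V → Option Bool) (a : V → Bool) :
    restrict Φ θ a = Φ (fill θ a) := rfl

theorem fill_eq_true_iff {θ : V → Option Bool} {a : V → Bool} {v : V} :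
    fill θ a v = true ↔ θ v = some true ∨ θ v = none ∧ a v = true := by
  unfold fill
  cases θ v <;> simp

theorem monotone_fill (θ : V → Option Bool) : Monotone (fill θ) := by
  intro a b hab v
  unfold fill
  cases θ v
  exacts [hab v, le_rfl]

theorem monotone_restrict {Φ : (V → Bool) → Bool} (hΦ : Monotone Φ) (θ : V → Option Bool) :
    Monotone (restrict Φ θ) :=
  hΦ.comp (monotone_fill θ)

def minAssign (τ : V → Option Bool) : V → Bool :=
  fun v => decide (τ v = some true)

theorem termImplies_iff_of_monotone {Φ : (V → Bool) → Bool} (hΦ : Monotone Φ)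
    (τ : V → Option Bool) : TermImplies τ Φ ↔ Φ (minAssign τ) = true := by
  refine ⟨fun h => h _ fun v b hv => by cases b <;> simp [minAssign, hv], fun h a ha => ?_⟩
  refine Bool.le_iff_imp.1 (hΦ fun v => Bool.le_iff_imp.2 fun hv => ?_) h
  exact ha v true (of_decide_eq_true hv)

variable [DecidableEq V]

def pairTerm (x y : V) : V → Option Bool :=
  fun v => if v = x ∨ v = y then some true else none

def twoPoint (x y : V) (b c : Bool) : V → Bool :=
  fun v => (decide (v = x) && b) || (decide (v = y) && c)

theorem twoPoint_left {x y : V} (hxy : x ≠ y) (b c : Bool) : twoPoint x y b c x = b := by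
  simp [twoPoint, hxy]

theorem twoPoint_right {x y : V} (hxy : x ≠ y) (b c : Bool) : twoPoint x y b c y = c := by
  simp [twoPoint, hxy.symm]

theorem eq_or_eq_of_twoPoint {x y v : V} {b c : Bool} (h : twoPoint x y b c v = true) :
    v = x ∨ v = y := by
  simp only [twoPoint, Bool.or_eq_true, Bool.and_eq_true, decide_eq_true_eq] at h
  tauto

theorem twoPoint_mono (x y : V) {b b' c c' : Bool} (hb : b ≤ b') (hc : c ≤ c') :
    twoPoint x y b c ≤ twoPoint x y b' c' := by
  intro v
  rw [Bool.le_iff_imp] at hb hc ⊢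
  simp only [twoPoint, Bool.or_eq_true, Bool.and_eq_true]
  tauto

theorem minAssign_pairTerm (x y : V) : minAssign (pairTerm x y) = twoPoint x y true true := by
  funext v
  simp [minAssign, pairTerm, twoPoint]

theorem minAssign_single_left (x y : V) : minAssign (single x true) = twoPoint x y true false := by
  funext v
  simp [minAssign, single, twoPoint]

theorem minAssign_single_right (x y : V) : minAssign (single y true) = twoPoint x y false true := by
  funext v
  simp [minAssign, single, twoPoint]

theorem subterm_single_pairTerm {x y z : V} (hz : z = x ∨ z = y) :
    Subterm (single z true) (pairTerm x y) := by
  intro v b hv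
  by_cases h : v = z <;> simp_all [single, pairTerm]

theorem single_ne_pairTerm {x y : V} (hxy : x ≠ y) (z : V) : single z true ≠ pairTerm x y := by
  intro h
  have hx := congrFun h x
  have hy := congrFun h y
  by_cases hzx : x = z <;> simp_all [single, pairTerm, eq_comm]

theorem minAssign_le_twoPoint_of_subterm {x y : V} (hxy : x ≠ y) {τ : V → Option Bool}
    (hτ : Subterm τ (pairTerm x y)) :
    minAssign τ ≤ twoPoint x y (decide (τ x = some true)) (decide (τ y = some true)) := by
  intro v
  refine Bool.le_iff_imp.2 fun hv => ?_
  have hv := of_decide_eq_true hv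
  have hxy' : v = x ∨ v = y := by
    by_contra h
    simpa [pairTerm, h] using hτ v true hv
  rcases hxy' with rfl | rfl
  · simp [twoPoint, hv]
  · simp [twoPoint, hv, hxy.symm]

theorem Subterm.eq_pairTerm {x y : V} {τ : V → Option Bool} (hτ : Subterm τ (pairTerm x y))
    (hx : τ x = some true) (hy : τ y = some true) : τ = pairTerm x y := by
  funext v
  by_cases hv : v = x ∨ v = y
  · rcases hv with rfl | rfl <;> simp [pairTerm, hx, hy]
  · cases hτv : τ v with
    | none => simp [pairTerm, hv]
    | some b => simpa [pairTerm, hv] using hτ v b hτv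

theorem IsPrimeImplicant.twoPoint_pairTerm {Φ : (V → Bool) → Bool} (hΦ : Monotone Φ) {x y : V}
    (hxy : x ≠ y) (h : IsPrimeImplicant (pairTerm x y) Φ) (b c : Bool) :
    Φ (twoPoint x y b c) = (b && c) := by
  obtain ⟨himp, hprime⟩ := h
  have h₁₁ : Φ (twoPoint x y true true) = true := by
    rwa [termImplies_iff_of_monotone hΦ, minAssign_pairTerm] at himp
  have h₁₀ : Φ (twoPoint x y true false) = false := by
    simpa [termImplies_iff_of_monotone hΦ, minAssign_single_left x y] using
      hprime _ (subterm_single_pairTerm (.inl rfl)) (single_ne_pairTerm hxy x)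
  have h₀₁ : Φ (twoPoint x y false true) = false := by
    simpa [termImplies_iff_of_monotone hΦ, minAssign_single_right x y] using
      hprime _ (subterm_single_pairTerm (.inr rfl)) (single_ne_pairTerm hxy y)
  have h₀₀ : Φ (twoPoint x y false false) = false := by
    simpa [h₀₁] using Bool.le_iff_imp.1 (hΦ (twoPoint_mono x y (le_refl false) (Bool.false_le true)))
  cases b <;> cases c <;> assumption

theorem isPrimeImplicant_pairTerm_iff {Φ : (V → Bool) → Bool} (hΦ : Monotone Φ) {x y : V}
    (hxy : x ≠ y) :
    IsPrimeImplicant (pairTerm x y) Φ ↔ ∀ b c, Φ (twoPoint x y b c) = (b && c) := by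
  refine ⟨IsPrimeImplicant.twoPoint_pairTerm hΦ hxy, fun h => ⟨?_, fun τ hτ hne himp => ?_⟩⟩
  · rw [termImplies_iff_of_monotone hΦ, minAssign_pairTerm, h]
    rfl
  · have hval := Bool.le_iff_imp.1 (hΦ (minAssign_le_twoPoint_of_subterm hxy hτ))
      ((termImplies_iff_of_monotone hΦ _).1 himp)
    rw [h, Bool.and_eq_true, decide_eq_true_eq, decide_eq_true_eq] at hval
    exact hne (hτ.eq_pairTerm hval.1 hval.2)

end BF

section

def HVar.pos {n k : ℕ} : HVar n k → ℕ
  | .R _ => 0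
  | .S l _ _ => l + 1
  | .T _ => k + 1

variable {n k : ℕ}

/-- Position `q ≤ k + 1` on the chain `R(i), S₁(i,j), …, S_k(i,j), T(j)` of `P = (i, j)`, so that
`P_{ℓ,i,j}` is the edge between positions `ℓ` and `ℓ + 1`; positions beyond `k + 1` give `T(j)`. -/
def chainVar (k : ℕ) (P : Fin n × Fin n) (q : ℕ) : HVar n k :=
  if h₀ : q = 0 then .R P.1 else if h : q ≤ k then .S ⟨q - 1, by omega⟩ P.1 P.2 else .T P.2

theorem pos_chainVar (P : Fin n × Fin n) {q : ℕ} (hq : q ≤ k + 1) : (chainVar k P q).pos = q := by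
  unfold chainVar
  split_ifs <;> simp [HVar.pos] <;> omega

theorem eq_of_chainVar_eq {P Q : Fin n × Fin n} {q q' : ℕ} (hq : q ≤ k + 1) (hq' : q' ≤ k + 1)
    (h : chainVar k P q = chainVar k Q q') : q = q' := by
  rw [← pos_chainVar P hq, ← pos_chainVar Q hq', h]

theorem chainVar_ne_chainVar_succ (P : Fin n × Fin n) {q : ℕ} (hq : q ≤ k) :
    chainVar k P q ≠ chainVar k P (q + 1) := fun h => by
  have := eq_of_chainVar_eq (by omega) (by omega) h
  omega

theorem leftVar_eq_chainVar (l : Fin (k + 1)) (i j : Fin n) :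
    leftVar n k l i j = chainVar k (i, j) l := by
  unfold leftVar chainVar
  split_ifs <;> first | rfl | omega

theorem rightVar_eq_chainVar (l : Fin (k + 1)) (i j : Fin n) :
    rightVar n k l i j = chainVar k (i, j) (l + 1) := by
  unfold rightVar chainVar
  split_ifs <;> first | rfl | omega

theorem chainVar_adj (hk : 1 ≤ k) {E P Q : Fin n × Fin n} {l : ℕ} (hl : l ≤ k)
    (hP : chainVar k E l = chainVar k P l) (hQ : chainVar k E (l + 1) = chainVar k Q (l + 1)) :
    P = Q ∨ (l = 0 ∧ P.1 = Q.1) ∨ (l = k ∧ P.2 = Q.2) := by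
  unfold chainVar at hP hQ
  split_ifs at hP hQ <;> simp_all [Prod.ext_iff]
  omega

theorem Hfun_eq_true_iff {l : Fin (k + 1)} {x : HVar n k → Bool} :
    Hfun n k l x = true ↔
      ∃ E : Fin n × Fin n, x (chainVar k E l) = true ∧ x (chainVar k E (l + 1)) = true := by
  simp [Hfun, Pfun, leftVar_eq_chainVar, rightVar_eq_chainVar]

theorem monotone_Hfun (l : Fin (k + 1)) : Monotone (Hfun n k l) := by
  intro x y hxy
  refine Bool.le_iff_imp.2 fun h => ?_
  obtain ⟨E, h₁, h₂⟩ := Hfun_eq_true_iff.1 h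
  exact Hfun_eq_true_iff.2 ⟨E, Bool.le_iff_imp.1 (hxy _) h₁, Bool.le_iff_imp.1 (hxy _) h₂⟩

theorem Pterm_eq_pairTerm (l : Fin (k + 1)) (P : Fin n × Fin n) :
    Pterm n k l P.1 P.2 = BF.pairTerm (chainVar k P l) (chainVar k P (l + 1)) := by
  unfold Pterm BF.pairTerm
  simp only [leftVar_eq_chainVar, rightVar_eq_chainVar]

theorem transversal_iff_twoPoint {θ : HVar n k → Option Bool} {P : Fin n × Fin n} :
    Transversal n k θ P ↔ ∀ (l : Fin (k + 1)) (b c : Bool),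
      BF.restrict (Hfun n k l) θ (BF.twoPoint (chainVar k P l) (chainVar k P (l + 1)) b c)
        = (b && c) := by
  refine forall_congr' fun l => ?_
  rw [Pterm_eq_pairTerm]
  exact BF.isPrimeImplicant_pairTerm_iff (BF.monotone_restrict (monotone_Hfun l) θ)
    (chainVar_ne_chainVar_succ P (Nat.lt_succ_iff.1 l.2))

def OnChain (P : Fin n × Fin n) (a : HVar n k → Bool) : Prop :=
  ∀ v, a v = true → ∃ q ≤ k + 1, v = chainVar k P q

theorem onChain_twoPoint (P : Fin n × Fin n) (l : Fin (k + 1)) (b c : Bool) :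
    OnChain P (BF.twoPoint (chainVar k P l) (chainVar k P (l + 1)) b c) := by
  intro v hv
  rcases BF.eq_or_eq_of_twoPoint hv with rfl | rfl
  exacts [⟨l, by omega, rfl⟩, ⟨l + 1, by omega, rfl⟩]

theorem fill_chainVar_of_onChain {θ : HVar n k → Option Bool} {P E : Fin n × Fin n}
    {a b : HVar n k → Bool} (ha : OnChain P a) {q : ℕ} (hq : q ≤ k + 1)
    (hab : a (chainVar k P q) = true → b (chainVar k P q) = true)
    (h : BF.fill θ a (chainVar k E q) = true) : BF.fill θ b (chainVar k E q) = true := by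
  rcases BF.fill_eq_true_iff.1 h with hθ | ⟨hθ, hv⟩
  · exact BF.fill_eq_true_iff.2 (.inl hθ)
  · obtain ⟨q', hq', he⟩ := ha _ hv
    obtain rfl := eq_of_chainVar_eq hq hq' he
    rw [he] at hθ hv ⊢
    exact BF.fill_eq_true_iff.2 (.inr ⟨hθ, hab hv⟩)

theorem restrict_Hfun_congr_of_onChain {θ : HVar n k → Option Bool} {P : Fin n × Fin n}
    {a b : HVar n k → Bool} (ha : OnChain P a) (hb : OnChain P b) (l : Fin (k + 1))
    (hl : a (chainVar k P l) = b (chainVar k P l))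
    (hr : a (chainVar k P (l + 1)) = b (chainVar k P (l + 1))) :
    BF.restrict (Hfun n k l) θ a = BF.restrict (Hfun n k l) θ b := by
  have key : ∀ a b : HVar n k → Bool, OnChain P a → a (chainVar k P l) = b (chainVar k P l) →
      a (chainVar k P (l + 1)) = b (chainVar k P (l + 1)) →
      BF.restrict (Hfun n k l) θ a = true → BF.restrict (Hfun n k l) θ b = true := by
    intro a b ha hl hr h
    obtain ⟨E, h₁, h₂⟩ := Hfun_eq_true_iff.1 h
    exact Hfun_eq_true_iff.2 ⟨E, fill_chainVar_of_onChain ha (by omega) (hl ▸ id) h₁,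
      fill_chainVar_of_onChain ha (by omega) (hr ▸ id) h₂⟩
  exact Bool.eq_iff_iff.2 ⟨key a b ha hl hr, key b a hb hl.symm hr.symm⟩

theorem restrict_Hfun_eq_twoPoint {θ : HVar n k → Option Bool} {P : Fin n × Fin n}
    {a : HVar n k → Bool} (ha : OnChain P a) (l : Fin (k + 1)) :
    BF.restrict (Hfun n k l) θ a = BF.restrict (Hfun n k l) θ
      (BF.twoPoint (chainVar k P l) (chainVar k P (l + 1)) (a (chainVar k P l))
        (a (chainVar k P (l + 1)))) := by
  have hne := chainVar_ne_chainVar_succ P (Nat.lt_succ_iff.1 l.2)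
  exact restrict_Hfun_congr_of_onChain ha (onChain_twoPoint P l _ _) l
    (BF.twoPoint_left hne _ _).symm (BF.twoPoint_right hne _ _).symm

theorem Transversal.restrict_Hfun_of_onChain {θ : HVar n k → Option Bool} {P : Fin n × Fin n}
    (hP : Transversal n k θ P) {a : HVar n k → Bool} (ha : OnChain P a) (l : Fin (k + 1)) :
    BF.restrict (Hfun n k l) θ a = (a (chainVar k P l) && a (chainVar k P (l + 1))) := by
  rw [restrict_Hfun_eq_twoPoint ha]
  exact transversal_iff_twoPoint.1 hP l _ _

def Separated (a b : HVar n k → Bool) : Prop :=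
  ∀ (l : Fin (k + 1)) (E : Fin n × Fin n),
    a (chainVar k E l) = true → b (chainVar k E (l + 1)) = true → False

theorem restrict_Hfun_eq_true_iff_exists {ι : Type} [Nonempty ι] {θ : HVar n k → Option Bool}
    {as : ι → HVar n k → Bool} (hsep : Pairwise fun s t => Separated (as s) (as t))
    {a : HVar n k → Bool} (ha : ∀ v, a v = true ↔ ∃ s, as s v = true) (l : Fin (k + 1)) :
    BF.restrict (Hfun n k l) θ a = true ↔ ∃ s, BF.restrict (Hfun n k l) θ (as s) = true := by
  refine ⟨fun h => ?_, fun ⟨s, hs⟩ => Bool.le_iff_imp.1 (BF.monotone_restrict (monotone_Hfun l) θ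
    fun v => Bool.le_iff_imp.2 fun hv => (ha v).2 ⟨s, hv⟩) hs⟩
  rw [BF.restrict_apply] at h
  obtain ⟨E, h₁, h₂⟩ := Hfun_eq_true_iff.1 h
  simp only [BF.fill_eq_true_iff, ha] at h₁ h₂
  have hθ : ∀ {w} s, θ w = some true → BF.fill θ (as s) w = true :=
    fun s hw => BF.fill_eq_true_iff.2 (.inl hw)
  have hfree : ∀ {w s}, θ w = none → as s w = true → BF.fill θ (as s) w = true :=
    fun hw hs => BF.fill_eq_true_iff.2 (.inr ⟨hw, hs⟩)
  suffices ∃ s, BF.fill θ (as s) (chainVar k E l) = true ∧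
      BF.fill θ (as s) (chainVar k E (l + 1)) = true from
    this.imp fun s hs => Hfun_eq_true_iff.2 ⟨E, hs⟩
  rcases h₁ with h₁ | ⟨h₁, s, hs⟩ <;> rcases h₂ with h₂ | ⟨h₂, t, ht⟩
  · obtain ⟨s⟩ := ‹Nonempty ι›
    exact ⟨s, hθ s h₁, hθ s h₂⟩
  · exact ⟨t, hθ t h₁, hfree h₂ ht⟩
  · exact ⟨s, hfree h₁ hs, hθ s h₂⟩
  · obtain rfl : s = t := by_contra fun hst => hsep hst l E hs ht
    exact ⟨s, hfree h₁ hs, hfree h₂ ht⟩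

def chainAssign (k : ℕ) (P : Fin n × Fin n) (d : ℕ → Bool) : HVar n k → Bool
  | .R i => decide (i = P.1) && d 0
  | .S l i j => decide ((i, j) = P) && d (l + 1)
  | .T j => decide (j = P.2) && d (k + 1)

theorem chainAssign_chainVar (P : Fin n × Fin n) (d : ℕ → Bool) {q : ℕ} (hq : q ≤ k + 1) :
    chainAssign k P d (chainVar k P q) = d q := by
  unfold chainVar
  split_ifs <;> simp only [chainAssign, decide_true, Bool.true_and] <;> congr 1 <;> omega

theorem exists_of_chainAssign_eq_true {P : Fin n × Fin n} {d : ℕ → Bool} {v : HVar n k}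
    (h : chainAssign k P d v = true) : ∃ q ≤ k + 1, v = chainVar k P q ∧ d q = true := by
  cases v with
  | R i =>
    simp only [chainAssign, Bool.and_eq_true, decide_eq_true_eq] at h
    exact ⟨0, by omega, by simp [chainVar, h.1], h.2⟩
  | S l i j =>
    simp only [chainAssign, Bool.and_eq_true, decide_eq_true_eq] at h
    refine ⟨l + 1, by omega, ?_, h.2⟩
    simp [chainVar, ← h.1, Nat.succ_le_of_lt l.2]
  | T j =>
    simp only [chainAssign, Bool.and_eq_true, decide_eq_true_eq] at h
    exact ⟨k + 1, le_rfl, by simp [chainVar, h.1], h.2⟩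

theorem onChain_chainAssign (P : Fin n × Fin n) (d : ℕ → Bool) :
    OnChain P (chainAssign k P d) := fun _ hv =>
  (exists_of_chainAssign_eq_true hv).imp fun _ ⟨hq, hv, _⟩ => ⟨hq, hv⟩

theorem Transversal.restrict_Hfun_chainAssign {θ : HVar n k → Option Bool} {P : Fin n × Fin n}
    (hP : Transversal n k θ P) (d : ℕ → Bool) (l : Fin (k + 1)) :
    BF.restrict (Hfun n k l) θ (chainAssign k P d) = (d l && d (l + 1)) := by
  rw [hP.restrict_Hfun_of_onChain (onChain_chainAssign P d), chainAssign_chainVar P d (by omega),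
    chainAssign_chainVar P d (by omega)]

theorem separated_chainAssign (hk : 1 ≤ k) {P Q : Fin n × Fin n} {d e : ℕ → Bool} (hPQ : P ≠ Q)
    (hrow : P.1 = Q.1 → d 0 = false ∨ e 1 = false)
    (hcol : P.2 = Q.2 → d k = false ∨ e (k + 1) = false) :
    Separated (chainAssign k P d) (chainAssign k Q e) := by
  intro l E h₁ h₂
  obtain ⟨q, hq, hv, hd⟩ := exists_of_chainAssign_eq_true h₁
  obtain ⟨q', hq', hv', he⟩ := exists_of_chainAssign_eq_true h₂
  obtain rfl := eq_of_chainVar_eq (by omega) hq hv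
  obtain rfl := eq_of_chainVar_eq (by omega) hq' hv'
  rcases chainVar_adj hk (by omega) hv hv' with h | ⟨hl, h⟩ | ⟨hl, h⟩
  · exact hPQ h
  · rw [hl] at hd he
    rcases hrow h with h | h <;> simp_all
  · rw [hl] at hd he
    rcases hcol h with h | h <;> simp_all

/-- A vertex set on the path `0, 1, 2, …` is given by `c : ℕ → Bool`; its edges are the `l` with
`c l && c (l + 1)`. `edgeChain E` is the set of endpoints of the edges `E`, which has no further
edges as long as `E` has no isolated gap. -/
def edgeChain (E : ℕ → Bool) : ℕ → Bool
  | 0 => E 0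
  | q + 1 => E (q + 1) || E q

theorem edgeChain_and_succ {E : ℕ → Bool}
    (hE : ∀ m, E m = true → E (m + 2) = true → E (m + 1) = true) (l : ℕ) :
    (edgeChain E l && edgeChain E (l + 1)) = E l := by
  cases l with
  | zero => cases h : E 0 <;> simp [edgeChain, h]
  | succ m =>
    have := hE m
    revert this
    simp only [edgeChain]
    cases E m <;> cases E (m + 1) <;> cases E (m + 2) <;> simp

/-- The parity of the number of runs of `B` ending before `l`: consecutive runs get different
parities, so two chains never merge them across a gap of length one. -/
def runParity (B : ℕ → Bool) : ℕ → Bool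
  | 0 => false
  | l + 1 => xor (runParity B l) (B l && !B (l + 1))

def parityChain (B : ℕ → Bool) (t : Bool) : ℕ → Bool :=
  edgeChain fun l => B l && runParity B l == t

def Realizes {ι : Type} (c : ι → ℕ → Bool) (B : ℕ → Bool) : Prop :=
  ∀ l, (∃ s, (c s l && c s (l + 1)) = true) ↔ B l = true

theorem realizes_parityChain (B : ℕ → Bool) : Realizes (parityChain B) B := by
  intro l
  have hgap : ∀ t m, (B m && runParity B m == t) = true →
      (B (m + 2) && runParity B (m + 2) == t) = true → (B (m + 1) && runParity B (m + 1) == t) = true := by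
    intro t m h₀ h₂
    simp only [runParity, Bool.and_eq_true, beq_iff_eq] at h₀ h₂ ⊢
    cases h : B (m + 1) <;> simp_all
  simp only [parityChain, edgeChain_and_succ (hgap _), Bool.and_eq_true, beq_iff_eq]
  exact ⟨fun ⟨_, h, _⟩ => h, fun h => ⟨_, h, rfl⟩⟩

theorem parityChain_true_zero (B : ℕ → Bool) : parityChain B true 0 = false := by
  simp [parityChain, edgeChain, runParity]

theorem parityChain_true_one (B : ℕ → Bool) : parityChain B true 1 = false := by
  cases h : B 1 <;> simp [parityChain, edgeChain, runParity, h]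

/-- The edges `l` with `l + 2 ≤ k` are split by run parity between `A` and `C` (the runs given
to `A` come after a gap, so avoid the vertices `0, 1`), and the last two edges go to `F`. -/
theorem exists_three_chains (B : ℕ → Bool) (hB : ∀ l, B l = true → l ≤ k) :
    ∃ A C F : ℕ → Bool, A 0 = false ∧ A 1 = false ∧ C k = false ∧ C (k + 1) = false ∧
      ∀ l, ((A l && A (l + 1)) || (C l && C (l + 1)) || (F l && F (l + 1))) = B l := by
  set low : ℕ → Bool := fun l => B l && decide (l + 2 ≤ k)
  set high : ℕ → Bool := fun l => B l && decide (k ≤ l + 1)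
  have hC : ∀ q, k ≤ q → parityChain low false q = false := by
    intro q hq
    cases q <;> simp [parityChain, edgeChain, low] <;> omega
  refine ⟨parityChain low true, parityChain low false, edgeChain high, parityChain_true_zero _,
    parityChain_true_one _, hC k le_rfl, hC (k + 1) (by omega), fun l => ?_⟩
  have hhigh : ∀ m, high m = true → high (m + 2) = true → high (m + 1) = true := by
    intro m h₀ h₂
    simp only [high, Bool.and_eq_true, decide_eq_true_eq] at h₀ h₂
    have := hB _ h₂.1
    omega
  have hlow : ((parityChain low true l && parityChain low true (l + 1)) ||
      (parityChain low false l && parityChain low false (l + 1))) = low l :=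
    Bool.eq_iff_iff.2 (by simpa [Bool.exists_bool, or_comm] using realizes_parityChain low l)
  rw [hlow, edgeChain_and_succ hhigh]
  cases h : B l <;> simp [low, high, h]
  omega

theorem exists_fin_three_chains {R C : Fin 3 → Prop} (hR : ∀ s t, R s → R t → s = t)
    (hC : ∀ s t, C s → C t → s = t) (hRC : ∀ t, R t → ¬ C t) (B : ℕ → Bool)
    (hB : ∀ l, B l = true → l ≤ k) :
    ∃ c : Fin 3 → ℕ → Bool, Realizes c B ∧
      (∀ t, R t → c t 0 = false ∧ c t 1 = false) ∧
      (∀ t, C t → c t k = false ∧ c t (k + 1) = false) := by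
  classical
  obtain ⟨a, ha, haC⟩ : ∃ a, (∀ t, R t → t = a) ∧ ¬ C a := by
    by_cases h : ∃ r, R r
    · obtain ⟨r, hr⟩ := h
      exact ⟨r, fun t ht => hR t r ht hr, hRC r hr⟩
    · by_cases h₀ : C 0
      · exact ⟨1, fun t ht => (h ⟨t, ht⟩).elim, fun h₁ => absurd (hC 0 1 h₀ h₁) (by decide)⟩
      · exact ⟨0, fun t ht => (h ⟨t, ht⟩).elim, h₀⟩
  obtain ⟨b, hba, hb⟩ : ∃ b, b ≠ a ∧ ∀ t, C t → t = b := by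
    by_cases h : ∃ c, C c
    · obtain ⟨c, hc⟩ := h
      exact ⟨c, fun h => haC (h ▸ hc), fun t ht => hC t c ht hc⟩
    · have : ∀ a : Fin 3, ∃ b, b ≠ a := by decide
      obtain ⟨b, hb⟩ := this a
      exact ⟨b, hb, fun t ht => (h ⟨t, ht⟩).elim⟩
  obtain ⟨e, hea, heb⟩ : ∃ e : Fin 3, e ≠ a ∧ e ≠ b := by
    have : ∀ a b : Fin 3, ∃ e, e ≠ a ∧ e ≠ b := by decide
    exact this a b
  obtain ⟨A, C', F, hA₀, hA₁, hCk, hCk₁, hABC⟩ := exists_three_chains B hB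
  refine ⟨fun t => if t = a then A else if t = b then C' else F, fun l => ?_,
    fun t ht => by simp [ha t ht, hA₀, hA₁], fun t ht => by simp [hb t ht, hba, hCk, hCk₁]⟩
  rw [← hABC l, Bool.or_eq_true, Bool.or_eq_true]
  constructor
  · rintro ⟨t, ht⟩
    simp only at ht
    split_ifs at ht <;> simp [ht]
  · rintro ((h | h) | h)
    exacts [⟨a, by simpa using h⟩, ⟨b, by simpa [hba] using h⟩, ⟨e, by simpa [hea, heb] using h⟩]

section Gate

variable {f : (Fin (k + 1) → Bool) → Bool} {G : Fin (k + 1) → Bool → Bool → Bool}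

/-- `G` can stand in for the edge indicators `d_l ∧ d_{l+1}` of the path `0, …, k + 1` inside `f`,
up to a correction `W` that may depend on `B` but not on `d`. -/
def ReplacesEdges (f : (Fin (k + 1) → Bool) → Bool) (G : Fin (k + 1) → Bool → Bool → Bool) :
    Prop :=
  ∀ B : Fin (k + 1) → Bool, ∃ W : Fin (k + 1) → Bool, ∀ d : ℕ → Bool,
    f (fun l => (d l && d (l + 1)) || B l) = f (fun l => G l (d l) (d (l + 1)) || W l)

theorem ReplacesEdges.exists_ne (hW : ReplacesEdges f G) (hf : ∀ l, BFDependsOn f l)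
    (l : Fin (k + 1)) {d₀ d₁ : ℕ → Bool} (h₀ : ∀ l' : Fin (k + 1), (d₀ l' && d₀ (l' + 1)) = false)
    (h₁ : ∀ l' : Fin (k + 1), (d₁ l' && d₁ (l' + 1)) = decide (l' = l)) :
    ∃ l', G l' (d₀ l') (d₀ (l' + 1)) ≠ G l' (d₁ l') (d₁ (l' + 1)) := by
  obtain ⟨μ, hμ⟩ := hf l
  have hμ' : f (Function.update μ l false) ≠ f (Function.update μ l true) := by
    rcases hμ with h | h <;> simp [h]
  obtain ⟨W, hW⟩ := hW (Function.update μ l false)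
  by_contra! hG
  refine hμ' ?_
  have e₀ : (fun l' : Fin (k + 1) => (d₀ l' && d₀ (l' + 1)) || Function.update μ l false l')
      = Function.update μ l false := by
    funext l'
    simp [h₀]
  have e₁ : (fun l' : Fin (k + 1) => (d₁ l' && d₁ (l' + 1)) || Function.update μ l false l')
      = Function.update μ l true := by
    funext l'
    by_cases h : l' = l
    · subst h
      simp [h₁]
    · simp [h₁, h]
  rw [← e₀, ← e₁, hW, hW]
  simp only [hG]

theorem ReplacesEdges.apply_true_false (hW : ReplacesEdges f G) (hf : ∀ l, BFDependsOn f l)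
    (hG : ∀ l x x' y y', x ≤ x' → y ≤ y' → G l x y ≤ G l x' y') (l : Fin (k + 1)) :
    G l true false = false := by
  by_contra! h
  -- At a maximal such `L`, adding the vertex `L + 1` to `{L}` changes no value of `G`.
  obtain ⟨L, hL, hmax⟩ := (Finset.univ.filter fun l => G l true false = true).exists_max_image
    (fun l => l.val) ⟨l, by simpa using h⟩
  simp only [Finset.mem_filter, Finset.mem_univ, true_and] at hL hmax
  obtain ⟨l', hl'⟩ := hW.exists_ne hf L (d₀ := fun q => decide (q = L))
    (d₁ := fun q => decide (q = L ∨ q = L + 1)) (by intro l'; simp; omega)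
    (by intro l'; rw [Bool.eq_iff_iff]; simp [Fin.ext_iff]; omega)
  have hl'' := (Bool.lt_iff.1 (lt_of_le_of_ne (hG _ _ _ _ _ (Bool.le_iff_imp.2 fun h => by simp_all)
    (Bool.le_iff_imp.2 fun h => by simp_all)) hl')).2
  by_cases h₁ : l' = L
  · subst h₁
    simp [hL, Bool.le_iff_imp.1 (hG _ _ _ _ _ le_rfl (Bool.false_le _)) hL] at hl'
  by_cases h₂ : l'.val = L.val + 1
  · have := hmax l' (by simpa [h₂, show (L : ℕ) + 1 + 1 ≠ L by omega] using hl'')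
    omega
  · have : l'.val ≠ L.val := fun h => h₁ (Fin.ext h)
    simp [this, h₂] at hl'

theorem ReplacesEdges.apply_false_true (hW : ReplacesEdges f G) (hf : ∀ l, BFDependsOn f l)
    (hG : ∀ l x x' y y', x ≤ x' → y ≤ y' → G l x y ≤ G l x' y') (l : Fin (k + 1)) :
    G l false true = false := by
  by_contra! h
  -- At a minimal such `L`, adding the vertex `L` to `{L + 1}` changes no value of `G`.
  obtain ⟨L, hL, hmin⟩ := (Finset.univ.filter fun l => G l false true = true).exists_min_image
    (fun l => l.val) ⟨l, by simpa using h⟩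
  simp only [Finset.mem_filter, Finset.mem_univ, true_and] at hL hmin
  obtain ⟨l', hl'⟩ := hW.exists_ne hf L (d₀ := fun q => decide (q = L + 1))
    (d₁ := fun q => decide (q = L ∨ q = L + 1)) (by intro l'; simp; omega)
    (by intro l'; rw [Bool.eq_iff_iff]; simp [Fin.ext_iff]; omega)
  have hl'' := (Bool.lt_iff.1 (lt_of_le_of_ne (hG _ _ _ _ _ (Bool.le_iff_imp.2 fun h => by simp_all)
    (Bool.le_iff_imp.2 fun h => by simp_all)) hl')).2
  by_cases h₁ : l' = L
  · subst h₁
    simp [hL, Bool.le_iff_imp.1 (hG _ _ _ _ _ (Bool.false_le _) le_rfl) hL] at hl'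
  by_cases h₂ : l'.val + 1 = L.val
  · have := hmin l' (by simpa [← h₂, show (l' : ℕ) ≠ l' + 1 + 1 by omega] using hl'')
    omega
  · have : l'.val ≠ L.val := fun h => h₁ (Fin.ext h)
    simp [this, h₂] at hl'

theorem ReplacesEdges.eq_and (hW : ReplacesEdges f G) (hf : ∀ l, BFDependsOn f l)
    (hG : ∀ l x x' y y', x ≤ x' → y ≤ y' → G l x y ≤ G l x' y') (l : Fin (k + 1)) (x y : Bool) :
    G l x y = (x && y) := by
  have hand : ∀ l x y, (x && y) = false → G l x y = false := by
    intro l x y hxy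
    cases x <;> cases y <;> simp at hxy
    · simpa [hW.apply_false_true hf hG l] using
        Bool.le_iff_imp.1 (hG l false false false true le_rfl (Bool.false_le true))
    · exact hW.apply_false_true hf hG l
    · exact hW.apply_true_false hf hG l
  cases h : (x && y)
  · exact hand l x y h
  obtain ⟨rfl, rfl⟩ : x = true ∧ y = true := by simpa using h
  have hd : ∀ l' : Fin (k + 1), ((decide (l'.val = l ∨ l'.val = l + 1)) &&
      decide (l'.val + 1 = l ∨ l'.val + 1 = l + 1)) = decide (l' = l) := by
    intro l'
    rw [Bool.eq_iff_iff]
    simp [Fin.ext_iff]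
    omega
  obtain ⟨l', hl'⟩ := hW.exists_ne hf l (d₀ := fun _ => false)
    (d₁ := fun q => decide (q = l ∨ q = l + 1)) (by simp) hd
  rw [hand l' false false rfl, ne_comm] at hl'
  simp only [ne_eq, Bool.not_eq_false] at hl'
  by_cases hll : l' = l
  · subst hll
    simpa using hl'
  · rw [hand l' _ _ (by rw [hd l', decide_eq_false hll])] at hl'
    exact absurd hl' (by simp)

end Gate

/-- Chains sharing their row share `R(i)`, which is joined in `H_{k0}` to `S₁` of both chains;
likewise for a shared column and `T(j)`. An assignment `e` of the chain of `Q` that avoids `P`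
stays off these vertices. -/
def Avoids (k : ℕ) (P Q : Fin n × Fin n) (e : ℕ → Bool) : Prop :=
  (P.1 = Q.1 → e 0 = false ∧ e 1 = false) ∧ (P.2 = Q.2 → e k = false ∧ e (k + 1) = false)

theorem restrict_Hfun_eq_true_iff_of_chainAssign (hk : 1 ≤ k) {ι : Type} {P : Fin n × Fin n}
    {Q : ι → Fin n × Fin n} (hQP : ∀ s, Q s ≠ P) (hQQ : Pairwise fun s t => IndepPairs (Q s) (Q t))
    {c : ι → ℕ → Bool}
    (hc : ∀ s, Avoids k P (Q s) (c s))
    {d : ℕ → Bool} {a : HVar n k → Bool}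
    (ha : ∀ v, a v = true ↔ chainAssign k P d v = true ∨ ∃ s, chainAssign k (Q s) (c s) v = true)
    (θ : HVar n k → Option Bool) (l : Fin (k + 1)) :
    BF.restrict (Hfun n k l) θ a = true ↔ BF.restrict (Hfun n k l) θ (chainAssign k P d) = true ∨
      ∃ s, BF.restrict (Hfun n k l) θ (chainAssign k (Q s) (c s)) = true := by
  let as : Option ι → HVar n k → Bool :=
    fun o => o.elim (chainAssign k P d) fun s => chainAssign k (Q s) (c s)
  have hsep : Pairwise fun o o' => Separated (as o) (as o') := by
    rintro (_ | s) (_ | t) hst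
    · exact absurd rfl hst
    · exact separated_chainAssign hk (hQP t).symm (fun h => .inr ((hc t).1 h).2)
        (fun h => .inr ((hc t).2 h).2)
    · exact separated_chainAssign hk (hQP s) (fun h => .inl ((hc s).1 h.symm).1)
        (fun h => .inl ((hc s).2 h.symm).1)
    · have hind := hQQ fun h => hst (congrArg some h)
      exact separated_chainAssign hk (fun h => hind.1 (congrArg Prod.fst h))
        (fun h => absurd h hind.1) (fun h => absurd h hind.2)
  rw [restrict_Hfun_eq_true_iff_exists hsep (a := a) (fun v => ?_) l, Option.exists]
  · rfl
  · rw [ha, Option.exists]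
    rfl

theorem Transversal.of_restrict_eq_of_helpers (hk : 1 ≤ k) {f : (Fin (k + 1) → Bool) → Bool}
    (hf : ∀ l, BFDependsOn f l) {θ θ' : HVar n k → Option Bool}
    (heq : BF.restrict (Psi n k f) θ' = BF.restrict (Psi n k f) θ) {P : Fin n × Fin n}
    (hP : Transversal n k θ P) {ι : Type} (Q : ι → Fin n × Fin n)
    (hQ : ∀ s, Transversal n k θ (Q s)) (hQP : ∀ s, Q s ≠ P)
    (hQQ : Pairwise fun s t => IndepPairs (Q s) (Q t))
    (hreal : ∀ B : ℕ → Bool, (∀ l, B l = true → l ≤ k) →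
      ∃ c : ι → ℕ → Bool, Realizes c B ∧ ∀ s, Avoids k P (Q s) (c s)) :
    Transversal n k θ' P := by
  classical
  refine transversal_iff_twoPoint.2 (ReplacesEdges.eq_and (G := fun l x y =>
    BF.restrict (Hfun n k l) θ' (BF.twoPoint (chainVar k P l) (chainVar k P (l + 1)) x y))
    (fun B => ?_) hf
    fun l _ _ _ _ hx hy => BF.monotone_restrict (monotone_Hfun l) θ' (BF.twoPoint_mono _ _ hx hy))
  obtain ⟨c, hcB, hc⟩ := hreal (fun l => if h : l < k + 1 then B ⟨l, h⟩ else false)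
    (fun l hl => by split_ifs at hl; omega)
  -- `W` is what the chains `Q s` contribute under `θ'`: it depends on `B` through `c`, not on `d`.
  refine ⟨fun l => decide (∃ s, BF.restrict (Hfun n k l) θ' (chainAssign k (Q s) (c s)) = true),
    fun d => ?_⟩
  let a : HVar n k → Bool :=
    fun v => decide (chainAssign k P d v = true ∨ ∃ s, chainAssign k (Q s) (c s) v = true)
  have ha := restrict_Hfun_eq_true_iff_of_chainAssign hk hQP hQQ hc (d := d) (a := a)
    (fun v => by simp [a])
  calc f (fun l => (d l && d (l + 1)) || B l)
      = f (fun l => BF.restrict (Hfun n k l) θ a) := by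
        congr 1
        funext l
        refine Bool.eq_iff_iff.2 ?_
        simp only [ha, hP.restrict_Hfun_chainAssign, (hQ _).restrict_Hfun_chainAssign, hcB l,
          dif_pos l.2, Bool.or_eq_true]
    _ = f (fun l => BF.restrict (Hfun n k l) θ' a) := (congrFun heq a).symm
    _ = _ := by
        congr 1
        funext l
        refine Bool.eq_iff_iff.2 ?_
        rw [ha, restrict_Hfun_eq_twoPoint (onChain_chainAssign P d),
          chainAssign_chainVar P d (by omega), chainAssign_chainVar P d (by omega)]
        simp

section Forward

variable {f : (Fin (k + 1) → Bool) → Bool} {θ θ' : HVar n k → Option Bool}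
  {S : Finset (Fin n × Fin n)} {p : Fin n × Fin n}

theorem Transversal.of_restrict_eq_of_mem (hk : 1 ≤ k) (hf : ∀ l, BFDependsOn f l)
    (heq : BF.restrict (Psi n k f) θ' = BF.restrict (Psi n k f) θ) (hS : 3 ≤ S.card)
    (hST : ∀ q ∈ S, Transversal n k θ q) (hSI : (S : Set (Fin n × Fin n)).Pairwise IndepPairs)
    (hpS : p ∈ S) : Transversal n k θ' p := by
  obtain ⟨x, hx, y, hy, hxy⟩ := Finset.one_lt_card.1
    (by rw [Finset.card_erase_of_mem hpS]; omega : 1 < (S.erase p).card)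
  have hind : ∀ {q r}, q ∈ S.erase p → r ∈ S → q ≠ r → IndepPairs q r :=
    fun hq hr hqr => hSI (Finset.mem_of_mem_erase hq) hr hqr
  have hQ : ∀ t, cond t x y ∈ S.erase p := fun t => by cases t <;> assumption
  refine (hST p hpS).of_restrict_eq_of_helpers hk hf heq (fun t => cond t x y)
    (fun t => hST _ (Finset.mem_of_mem_erase (hQ t))) (fun t => Finset.ne_of_mem_erase (hQ t))
    ?_ fun B _ => ⟨parityChain B, realizes_parityChain B, fun t => ?_⟩
  · rintro (_ | _) (_ | _) h
    exacts [absurd rfl h, hind hy (Finset.mem_of_mem_erase hx) hxy.symm,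
      hind hx (Finset.mem_of_mem_erase hy) hxy, absurd rfl h]
  · have := hind (hQ t) hpS (Finset.ne_of_mem_erase (hQ t))
    exact ⟨fun h => absurd h.symm this.1, fun h => absurd h.symm this.2⟩

theorem Transversal.of_restrict_eq_of_not_mem (hk : 1 ≤ k) (hf : ∀ l, BFDependsOn f l)
    (heq : BF.restrict (Psi n k f) θ' = BF.restrict (Psi n k f) θ) (hS : 3 ≤ S.card)
    (hST : ∀ q ∈ S, Transversal n k θ q) (hSI : (S : Set (Fin n × Fin n)).Pairwise IndepPairs)
    (hp : Transversal n k θ p) (hpS : p ∉ S) : Transversal n k θ' p := by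
  obtain ⟨x, y, z, hx, hy, hz, hxy, hxz, hyz⟩ := Finset.two_lt_card_iff.1 (by omega : 2 < S.card)
  set Q : Fin 3 → Fin n × Fin n := ![x, y, z]
  have hQS : ∀ t, Q t ∈ S := fun t => by fin_cases t <;> assumption
  have hQQ : Pairwise fun s t => IndepPairs (Q s) (Q t) := fun s t hst =>
    hSI (hQS s) (hQS t) (by fin_cases s <;> fin_cases t <;> simp_all [Q, eq_comm])
  have hQP : ∀ t, Q t ≠ p := fun t h => hpS (h ▸ hQS t)
  refine hp.of_restrict_eq_of_helpers hk hf heq Q (fun t => hST _ (hQS t)) hQP hQQ fun B hB => ?_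
  obtain ⟨c, hc, hrow, hcol⟩ := exists_fin_three_chains (R := fun t => p.1 = (Q t).1)
    (C := fun t => p.2 = (Q t).2) (fun s t hs ht => by_contra fun h => (hQQ h).1 (hs ▸ ht))
    (fun s t hs ht => by_contra fun h => (hQQ h).2 (hs ▸ ht))
    (fun t hr hc => hQP t (Prod.ext hr.symm hc.symm)) B hB
  exact ⟨c, hc, fun t => ⟨hrow t, hcol t⟩⟩

theorem Transversal.of_restrict_eq (hk : 1 ≤ k) (hf : ∀ l, BFDependsOn f l)
    (hθ : HasIndepTransversals n k θ 3)
    (heq : BF.restrict (Psi n k f) θ' = BF.restrict (Psi n k f) θ)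
    (hp : Transversal n k θ p) : Transversal n k θ' p := by
  obtain ⟨S, hS, hST, hSI⟩ := hθ
  by_cases hpS : p ∈ S
  · exact of_restrict_eq_of_mem hk hf heq hS hST hSI hpS
  · exact hp.of_restrict_eq_of_not_mem hk hf heq hS hST hSI hpS

end Forward

end

theorem same_transversals_general (n k : ℕ) (hk : 1 ≤ k)
    (f : (Fin (k+1) → Bool) → Bool) (hf : ∀ l, BFDependsOn f l)
    (θ : HVar n k → Option Bool) (hθ : HasIndepTransversals n k θ 3)
    (θ' : HVar n k → Option Bool)
    (heq : BF.restrict (Psi n k f) θ' = BF.restrict (Psi n k f) θ) :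
    ∀ p : Fin n × Fin n, Transversal n k θ' p ↔ Transversal n k θ p := by
  have hθ' : HasIndepTransversals n k θ' 3 := Exists.imp
    (fun _ ⟨hS, hST, hSI⟩ => ⟨hS, fun q hq => (hST q hq).of_restrict_eq hk hf hθ heq, hSI⟩) hθ
  exact fun p => ⟨fun hp => hp.of_restrict_eq hk hf hθ' heq.symm,
    fun hp => hp.of_restrict_eq hk hf hθ heq⟩

/-- If `f` depends on all of its `k+1` variables,
`Ψ = f(H_{k0},…,H_{kk})`, and `θ` has at least 3 pairwise independent transversals,
then every `θ'` with `Ψ[θ'] = Ψ[θ]` has exactly the same set of transversals. -/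
theorem same_transversals (n k : ℕ) (hn : 1 ≤ n) (hk : 1 ≤ k)
    (f : (Fin (k+1) → Bool) → Bool) (hf : ∀ l, BFDependsOn f l)
    (θ : HVar n k → Option Bool) (hθ : HasIndepTransversals n k θ 3)
    (θ' : HVar n k → Option Bool)
    (heq : BF.restrict (Psi n k f) θ' = BF.restrict (Psi n k f) θ) :
    ∀ p : Fin n × Fin n, Transversal n k θ' p ↔ Transversal n k θ p :=
  same_transversals_general n k hk f hf θ hθ θ' heq
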